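/- arXiv:1109.5417 — 7 statements merged into one kernel-verified Lean document; each statement's English description precedes it below -/
import Mathlib

section
/- If a code Z is signalling from receiver to sender, i.e. there exist w', x', y₀, y₁ with ∑_ŵ Z(x',ŵ|w',y₀) > ∑_ŵ Z(x',ŵ|w',y₁), then there exists a channel E (a stochastic matrix from A to B) such that ∑_{ŵ,x,y} Z(x,ŵ|w',y)·E(y|x) > 1. -/
/-- If a code `Z` is signalling from receiver to sender, then
there is a channel `E` for which the total probability exceeds 1. -/
theorem stmt1 {A B M : Type*} [Fintype A] [Fintype B] [Fintype M]
    [DecidableEq A] [DecidableEq B]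
    (Z : A → M → M → B → ℝ)
    (hZpos : ∀ x wh w y, 0 ≤ Z x wh w y)
    (hZsum : ∀ w y, ∑ x, ∑ wh, Z x wh w y = 1)
    (w' : M) (x' : A) (y₀ y₁ : B)
    (hsig : ∑ wh, Z x' wh w' y₁ < ∑ wh, Z x' wh w' y₀) :
    ∃ E : A → B → ℝ, (∀ x y, 0 ≤ E x y) ∧ (∀ x, ∑ y, E x y = 1) ∧
      1 < ∑ wh, ∑ x, ∑ y, Z x wh w' y * E x y := by
  refine ⟨fun x y => if x = x' then (if y = y₀ then 1 else 0) else (if y = y₁ then 1 else 0),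
    ?_, ?_, ?_⟩
  · intro x y
    dsimp only
    split <;> split <;> norm_num
  · intro x
    dsimp only
    split <;> simp
  · have key : ∀ wh, ∑ x, ∑ y, Z x wh w' y *
        (if x = x' then (if y = y₀ then 1 else 0) else (if y = y₁ then 1 else 0)) =
        (∑ x, Z x wh w' y₁) + (Z x' wh w' y₀ - Z x' wh w' y₁) := by
      intro wh
      have : ∀ x, ∑ y, Z x wh w' y *
          (if x = x' then (if y = y₀ then 1 else 0) else (if y = y₁ then 1 else 0)) =
          Z x wh w' y₁ + (if x = x' then Z x' wh w' y₀ - Z x' wh w' y₁ else 0) := by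
        intro x
        by_cases hx : x = x'
        · subst hx; simp
        · simp [hx]
      simp only [this, Finset.sum_add_distrib, Finset.sum_ite_eq' Finset.univ x',
        Finset.mem_univ, if_true]
    have hswap : ∑ wh, ∑ x, Z x wh w' y₁ = 1 := by
      rw [Finset.sum_comm]; exact hZsum w' y₁
    simp only [key, Finset.sum_add_distrib, hswap, Finset.sum_sub_distrib]
    linarith
end

section
/- The maximum success probability 1 − p_err over symmetric non-signalling codes of size M equals the value of the linear program: maximize ∑_{x,y} E(y|x)·R(x,y) subject to ∑_x R(x,y) ≤ 1/M for all y; R(x,y) ≤ p(x) for all x,y; ∑_x p(x) = 1; R ≥ 0, p ≥ 0. In particular, the LP with equality constraint ∑_x R(x,y) = 1/M has the same optimal value as the LP with inequality ∑_x R(x,y) ≤ 1/M. -/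
/-- The maximum success probability over symmetric
non-signalling codes of size `M` (which are exactly the feasible points of
the LP with the equality constraint `∑_x R(x,y) = 1/M`) equals the value of
the LP with the relaxed inequality constraint `∑_x R(x,y) ≤ 1/M`. -/
theorem stmt5 {A B : Type*} [Fintype A] [Fintype B]
    (E : A → B → ℝ) (hEpos : ∀ x y, 0 ≤ E x y) (hEsum : ∀ x, ∑ y, E x y = 1)
    (M : ℕ) (hM : 2 ≤ M) :
    sSup {s : ℝ | ∃ (R : A → B → ℝ) (p : A → ℝ),
        (∀ x y, 0 ≤ R x y) ∧ (∀ x, 0 ≤ p x) ∧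
        (∀ x y, R x y ≤ p x) ∧ (∑ x, p x = 1) ∧
        (∀ y, ∑ x, R x y = 1 / (M : ℝ)) ∧
        s = ∑ x, ∑ y, E x y * R x y}
    = sSup {s : ℝ | ∃ (R : A → B → ℝ) (p : A → ℝ),
        (∀ x y, 0 ≤ R x y) ∧ (∀ x, 0 ≤ p x) ∧
        (∀ x y, R x y ≤ p x) ∧ (∑ x, p x = 1) ∧
        (∀ y, ∑ x, R x y ≤ 1 / (M : ℝ)) ∧
        s = ∑ x, ∑ y, E x y * R x y} := by
  have hM2 : (2:ℝ) ≤ (M:ℝ) := by exact_mod_cast hM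
  have hMpos : (0:ℝ) < (M:ℝ) := by linarith
  have hMinv : 1/(M:ℝ) ≤ 1/2 := by
    apply one_div_le_one_div_of_le <;> linarith
  set S1 := {s : ℝ | ∃ (R : A → B → ℝ) (p : A → ℝ),
        (∀ x y, 0 ≤ R x y) ∧ (∀ x, 0 ≤ p x) ∧
        (∀ x y, R x y ≤ p x) ∧ (∑ x, p x = 1) ∧
        (∀ y, ∑ x, R x y = 1 / (M : ℝ)) ∧
        s = ∑ x, ∑ y, E x y * R x y} with hS1def
  set S2 := {s : ℝ | ∃ (R : A → B → ℝ) (p : A → ℝ),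
        (∀ x y, 0 ≤ R x y) ∧ (∀ x, 0 ≤ p x) ∧
        (∀ x y, R x y ≤ p x) ∧ (∑ x, p x = 1) ∧
        (∀ y, ∑ x, R x y ≤ 1 / (M : ℝ)) ∧
        s = ∑ x, ∑ y, E x y * R x y} with hS2def
  have hsub : S1 ⊆ S2 := by
    rintro s ⟨R, p, h1, h2, h3, h4, h5, h6⟩
    exact ⟨R, p, h1, h2, h3, h4, fun y => le_of_eq (h5 y), h6⟩
  have hbdd : ∀ s ∈ S2, s ≤ 1 := by
    rintro s ⟨R, p, hR0, hp0, hRp, hpsum, _, rfl⟩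
    calc ∑ x, ∑ y, E x y * R x y ≤ ∑ x, ∑ y, E x y * p x := by
          apply Finset.sum_le_sum; intro x _
          apply Finset.sum_le_sum; intro y _
          exact mul_le_mul_of_nonneg_left (hRp x y) (hEpos x y)
      _ = ∑ x, p x := by
          apply Finset.sum_congr rfl; intro x _
          rw [← Finset.sum_mul, hEsum x, one_mul]
      _ = 1 := hpsum
  have bdd2 : BddAbove S2 := ⟨1, fun s hs => hbdd s hs⟩
  have bdd1 : BddAbove S1 := ⟨1, fun s hs => hbdd s (hsub hs)⟩
  have key : ∀ s ∈ S2, ∃ s' ∈ S1, s ≤ s' := by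
    rintro s ⟨R, p, hR0, hp0, hRp, hpsum, hineq, rfl⟩
    set t : B → ℝ := fun y => (1/(M:ℝ) - ∑ x, R x y) / (1 - ∑ x, R x y) with ht
    have hden : ∀ y, 0 < 1 - ∑ x, R x y := fun y => by
      have := hineq y; linarith
    have ht0 : ∀ y, 0 ≤ t y := fun y =>
      div_nonneg (by have := hineq y; linarith) (le_of_lt (hden y))
    have ht1 : ∀ y, t y ≤ 1 := fun y => by
      simp only [ht]
      rw [div_le_one (hden y)]
      have h0 : (0:ℝ) < 1/(M:ℝ) := by positivity
      linarith
    refine ⟨∑ x, ∑ y, E x y * (R x y + t y * (p x - R x y)),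
      ⟨fun x y => R x y + t y * (p x - R x y), p, ?_, hp0, ?_, hpsum, ?_, rfl⟩, ?_⟩
    · intro x y
      show 0 ≤ R x y + t y * (p x - R x y)
      have h1 := hRp x y; have h2 := hR0 x y; have h3 := ht0 y
      nlinarith [mul_nonneg h3 (sub_nonneg.2 h1)]
    · intro x y
      show R x y + t y * (p x - R x y) ≤ p x
      have h1 := hRp x y; have h2 := ht1 y; have h3 := ht0 y
      nlinarith
    · intro y
      have hsum : ∑ x, (R x y + t y * (p x - R x y))
          = (∑ x, R x y) + t y * (1 - ∑ x, R x y) := by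
        rw [Finset.sum_add_distrib, ← Finset.mul_sum]
        congr 2
        rw [Finset.sum_sub_distrib, hpsum]
      have hc : t y * (1 - ∑ x, R x y) = 1/(M:ℝ) - ∑ x, R x y := by
        simp only [ht]
        exact div_mul_cancel₀ _ (ne_of_gt (hden y))
      rw [hsum, hc]; ring
    · apply Finset.sum_le_sum; intro x _
      apply Finset.sum_le_sum; intro y _
      have h1 := hRp x y; have h2 := ht0 y; have h3 := hEpos x y
      nlinarith [mul_nonneg h3 (mul_nonneg h2 (sub_nonneg.2 h1))]
  rcases Set.eq_empty_or_nonempty S2 with h2 | h2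
  · have h1 : S1 = ∅ := Set.eq_empty_of_subset_empty (h2 ▸ hsub)
    rw [h1, h2]
  · obtain ⟨s, hs⟩ := h2
    obtain ⟨s', hs', hss'⟩ := key s hs
    have hs'nn : 0 ≤ s' := by
      obtain ⟨R, p, hR0, _, _, _, _, rfl⟩ := hs'
      exact Finset.sum_nonneg fun x _ => Finset.sum_nonneg fun y _ =>
        mul_nonneg (hEpos x y) (hR0 x y)
    apply le_antisymm
    · exact csSup_le_csSup bdd2 ⟨s', hs'⟩ hsub
    · apply Real.sSup_le
      · intro a ha
        obtain ⟨a', ha', haa'⟩ := key a ha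
        exact haa'.trans (le_csSup bdd1 ha')
      · exact le_trans hs'nn (le_csSup bdd1 hs')
end

section
/- The minimum error probability over non-signalling codes of size M for channel E satisfies the duality: min over feasible (R,p) of 1 − ∑_{x,y} E(y|x)R(x,y) (primal constraints: ∑_x R(x,y) ≤ 1/M, 0 ≤ R(x,y) ≤ p(x), ∑_x p(x) = 1, p ≥ 0) equals max over z : B → ℝ of min over x ∈ A of ∑_y ( min{z(y), E(y|x)} − z(y)/M ). -/
/-!
Only the size constraint `∑ₓ R x y ≤ 1 / M` is dualized, with multiplier `z y`. The Lagrangian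
is affine in the pair `(R, p)` and in `z`, the pairs with `0 ≤ R ≤ p` and `∑ p = 1` form a
compact convex set, and it suffices to let `z` range over `[0, 1]^B`: since `E ≤ 1`, scaling a
column of `R` down to mass `1 / M` loses at most its excess mass in success probability, which
is exactly what `z y = 1` charges. Sion's minimax theorem then gives a saddle point. For fixed `z`
the Lagrangian is minimized by a point mass `p` at the worst input `x`, with `R x y = p x`
exactly where `z y < E x y`; its minimum is the dual objective.
-/

open Finset

lemma sub_mul_le_mul_sub_min {e r p z : ℝ} (hr : 0 ≤ r) (hrp : r ≤ p) :
    (e - z) * r ≤ p * (e - min z e) := by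
  rcases le_total z e with h | h
  · rw [min_eq_left h, mul_comm p]
    exact mul_le_mul_of_nonneg_left hrp (sub_nonneg.2 h)
  · rw [min_eq_right h, sub_self, mul_zero]
    exact mul_nonpos_of_nonpos_of_nonneg (sub_nonpos.2 h) hr

lemma convexOn_and_concaveOn_of_map_smul_add_smul {V : Type*} [AddCommMonoid V] [Module ℝ V]
    {s : Set V} (hs : Convex ℝ s) {f : V → ℝ}
    (hf : ∀ u v (a b : ℝ), a + b = 1 → f (a • u + b • v) = a * f u + b * f v) :
    ConvexOn ℝ s f ∧ ConcaveOn ℝ s f :=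
  ⟨⟨hs, fun u _ v _ a b _ _ hab ↦ (hf u v a b hab).le⟩,
    ⟨hs, fun u _ v _ a b _ _ hab ↦ (hf u v a b hab).ge⟩⟩

lemma exists_mul_sum_le {ι : Type*} [Fintype ι] {r e : ι → ℝ} (hr : ∀ x, 0 ≤ r x)
    (he : ∀ x, e x ≤ 1) {t : ℝ} (ht : 0 ≤ t) : ∃ c ∈ Set.Icc (0 : ℝ) 1, c * ∑ x, r x ≤ t ∧
      ∑ x, e x * r x ≤ c * ∑ x, e x * r x + max (∑ x, r x - t) 0 := by
  by_cases hs : ∑ x, r x ≤ t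
  · exact ⟨1, Set.right_mem_Icc.2 zero_le_one, by rwa [one_mul], by simp⟩
  replace hs := not_le.1 hs
  have hs0 : 0 < ∑ x, r x := ht.trans_lt hs
  have her : ∑ x, e x * r x ≤ ∑ x, r x :=
    sum_le_sum fun x _ ↦ mul_le_of_le_one_left (hr x) (he x)
  have hc : t / ∑ x, r x ≤ 1 := (div_le_one hs0).2 hs.le
  refine ⟨t / ∑ x, r x, ⟨by positivity, hc⟩, (div_mul_cancel₀ t hs0.ne').le, ?_⟩
  rw [max_eq_left (sub_nonneg.2 hs.le)]
  have key : (1 - t / ∑ x, r x) * ∑ x, e x * r x ≤ (1 - t / ∑ x, r x) * ∑ x, r x :=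
    mul_le_mul_of_nonneg_left her (sub_nonneg.2 hc)
  rw [sub_mul, sub_mul, one_mul, one_mul, div_mul_cancel₀ t hs0.ne'] at key
  linarith

namespace NonSignallingCode

variable {A B : Type*} [Fintype A]

def relaxedCodes : Set ((A → B → ℝ) × (A → ℝ)) :=
  {w | (∀ x y, 0 ≤ w.1 x y) ∧ (∀ x, 0 ≤ w.2 x) ∧ (∀ x y, w.1 x y ≤ w.2 x) ∧ ∑ x, w.2 x = 1}

lemma relaxedCodes_nonempty [Nonempty A] :
    (relaxedCodes : Set ((A → B → ℝ) × (A → ℝ))).Nonempty :=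
  ⟨(0, fun _ ↦ (Fintype.card A : ℝ)⁻¹), fun _ _ ↦ le_rfl, fun _ ↦ by positivity,
    fun _ _ ↦ by positivity, by simp⟩

lemma convex_relaxedCodes : Convex ℝ (relaxedCodes : Set ((A → B → ℝ) × (A → ℝ))) := by
  rintro ⟨R, p⟩ ⟨hR, hp, hRp, hp1⟩ ⟨R', p'⟩ ⟨hR', hp', hRp', hp1'⟩ a b ha hb hab
  refine ⟨fun x y ↦ ?_, fun x ↦ ?_, fun x y ↦ ?_, ?_⟩
  · simp only [Prod.fst_add, Prod.smul_fst, Pi.add_apply, Pi.smul_apply, smul_eq_mul]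
    have := hR x y; have := hR' x y; positivity
  · simp only [Prod.snd_add, Prod.smul_snd, Pi.add_apply, Pi.smul_apply, smul_eq_mul]
    have := hp x; have := hp' x; positivity
  · simp only [Prod.fst_add, Prod.smul_fst, Prod.snd_add, Prod.smul_snd, Pi.add_apply,
      Pi.smul_apply, smul_eq_mul]
    gcongr <;> simp_all
  · simp [sum_add_distrib, ← mul_sum, hp1, hp1', hab]

lemma isCompact_relaxedCodes :
    IsCompact (relaxedCodes : Set ((A → B → ℝ) × (A → ℝ))) := by
  have hclosed : IsClosed (relaxedCodes : Set ((A → B → ℝ) × (A → ℝ))) := by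
    simp only [relaxedCodes, Set.ofPred_and, Set.ofPred_forall]
    refine .inter (isClosed_iInter fun x ↦ isClosed_iInter fun y ↦ isClosed_le ?_ ?_) <|
      .inter (isClosed_iInter fun x ↦ isClosed_le ?_ ?_) <|
      .inter (isClosed_iInter fun x ↦ isClosed_iInter fun y ↦ isClosed_le ?_ ?_) <|
      isClosed_eq ?_ ?_ <;> fun_prop
  refine (isCompact_Icc (a := 0) (b := 1)).of_isClosed_subset hclosed ?_
  rintro ⟨R, p⟩ ⟨hR, hp, hRp, hp1⟩
  have hp_le : ∀ x, p x ≤ 1 := fun x ↦ hp1 ▸ single_le_sum (fun x _ ↦ hp x) (mem_univ x)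
  exact ⟨⟨hR, hp⟩, fun x y ↦ (hRp x y).trans (hp_le x), hp_le⟩

variable [Fintype B]

variable (E : A → B → ℝ) (M : ℝ)

def successProb (R : A → B → ℝ) : ℝ := ∑ x, ∑ y, E x y * R x y

noncomputable def dualValue (z : B → ℝ) : ℝ := ⨅ x, ∑ y, (min (z y) (E x y) - z y / M)

noncomputable def lagrangian (w : (A → B → ℝ) × (A → ℝ)) (z : B → ℝ) : ℝ :=
  1 - successProb E w.1 + ∑ y, z y * (∑ x, w.1 x y - 1 / M)

variable {E M}

lemma lagrangian_eq_sum_mul_add (hEsum : ∀ x, ∑ y, E x y = 1) {R : A → B → ℝ} {p : A → ℝ}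
    (hp : ∑ x, p x = 1) (z : B → ℝ) :
    lagrangian E M (R, p) z = ∑ x, p x * ∑ y, (min (z y) (E x y) - z y / M) +
      ∑ x, ∑ y, (p x * (E x y - min (z y) (E x y)) - (E x y - z y) * R x y) := by
  have h1 : (1 : ℝ) = ∑ x, ∑ y, p x * E x y := by simp [← mul_sum, hEsum, hp]
  have h2 : ∑ y, z y * (1 / M) = ∑ x, ∑ y, p x * (z y / M) := by
    simp only [← mul_sum, ← sum_mul, hp, one_mul, mul_one_div]
  have h3 : ∑ y, ∑ x, z y * R x y = ∑ x, ∑ y, z y * R x y := sum_comm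
  simp only [lagrangian, successProb, mul_sub, sub_mul, sum_sub_distrib, mul_sum]
  linear_combination h1 - h2 + h3

lemma dualValue_le_lagrangian (hEsum : ∀ x, ∑ y, E x y = 1)
    {w : (A → B → ℝ) × (A → ℝ)} (hw : w ∈ relaxedCodes) (z : B → ℝ) :
    dualValue E M z ≤ lagrangian E M w z := by
  obtain ⟨R, p⟩ := w
  obtain ⟨hR, hp, hRp, hp1⟩ := hw
  rw [lagrangian_eq_sum_mul_add hEsum hp1]
  have hgap : 0 ≤ ∑ x, ∑ y, (p x * (E x y - min (z y) (E x y)) - (E x y - z y) * R x y) :=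
    sum_nonneg fun x _ ↦ sum_nonneg fun y _ ↦
      sub_nonneg.2 (sub_mul_le_mul_sub_min (hR x y) (hRp x y))
  calc dualValue E M z = ∑ x, p x * dualValue E M z := by rw [← sum_mul, hp1, one_mul]
    _ ≤ ∑ x, p x * ∑ y, (min (z y) (E x y) - z y / M) := by
      gcongr with x
      · exact hp x
      · exact ciInf_le (Set.finite_range _).bddBelow x
    _ ≤ _ := le_add_of_nonneg_right hgap

lemma exists_lagrangian_le_dualValue [Nonempty A] (hEsum : ∀ x, ∑ y, E x y = 1)
    (z : B → ℝ) :
    ∃ w ∈ relaxedCodes, lagrangian E M w z ≤ dualValue E M z := by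
  classical
  obtain ⟨x₀, hx₀⟩ := exists_eq_ciInf_of_finite
    (f := fun x ↦ ∑ y, (min (z y) (E x y) - z y / M))
  let p : A → ℝ := Pi.single x₀ 1
  let R : A → B → ℝ := fun x y ↦ if z y < E x y then p x else 0
  have hp : 0 ≤ p := Pi.single_nonneg.2 zero_le_one
  refine ⟨(R, p), ⟨fun x y ↦ ?_, hp, fun x y ↦ ?_, by simp [p]⟩, ?_⟩
  · dsimp only [R]; split_ifs; exacts [hp x, le_rfl]
  · dsimp only [R]; split_ifs; exacts [le_rfl, hp x]
  have hgap : ∀ x y, p x * (E x y - min (z y) (E x y)) - (E x y - z y) * R x y = 0 := by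
    intro x y
    unfold R
    split_ifs with h
    · rw [min_eq_left h.le]; ring
    · rw [min_eq_right (not_lt.1 h)]; ring
  rw [lagrangian_eq_sum_mul_add hEsum (by simp [p])]
  simp only [hgap, sum_const_zero, add_zero, dualValue, ← hx₀]
  simp [p, Pi.single_apply]

lemma lagrangian_le_one_sub_successProb {R : A → B → ℝ} (p : A → ℝ) {z : B → ℝ}
    (hz : 0 ≤ z) (hRM : ∀ y, ∑ x, R x y ≤ 1 / M) :
    lagrangian E M (R, p) z ≤ 1 - successProb E R := by
  have : ∑ y, z y * (∑ x, R x y - 1 / M) ≤ 0 :=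
    sum_nonpos fun y _ ↦ mul_nonpos_of_nonneg_of_nonpos (hz y) (sub_nonpos.2 (hRM y))
  simp only [lagrangian]
  linarith

lemma dualValue_le_dualValue_max_zero (hE : ∀ x y, 0 ≤ E x y) (hM : 1 ≤ M) (z : B → ℝ) :
    dualValue E M z ≤ dualValue E M (fun y ↦ max (z y) 0) := by
  refine ciInf_mono (Set.finite_range _).bddBelow fun x ↦ sum_le_sum fun y _ ↦ ?_
  dsimp only
  rcases le_total 0 (z y) with h | h
  · rw [max_eq_left h]
  · rw [max_eq_right h, min_eq_left (h.trans (hE x y)), min_eq_left (hE x y), zero_div,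
      sub_zero]
    have : z y ≤ z y / M := by
      rw [le_div_iff₀ (by linarith)]; nlinarith
    linarith

lemma dualValue_le_one_sub_successProb (hE : ∀ x y, 0 ≤ E x y) (hEsum : ∀ x, ∑ y, E x y = 1)
    (hM : 1 ≤ M) (z : B → ℝ) {R : A → B → ℝ} {p : A → ℝ} (hw : (R, p) ∈ relaxedCodes)
    (hRM : ∀ y, ∑ x, R x y ≤ 1 / M) : dualValue E M z ≤ 1 - successProb E R :=
  calc dualValue E M z ≤ dualValue E M (fun y ↦ max (z y) 0) :=
        dualValue_le_dualValue_max_zero hE hM z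
    _ ≤ lagrangian E M (R, p) (fun y ↦ max (z y) 0) := dualValue_le_lagrangian hEsum hw _
    _ ≤ 1 - successProb E R :=
        lagrangian_le_one_sub_successProb p (fun _ ↦ le_max_right _ _) hRM

lemma exists_mem_relaxedCodes_le_lagrangian (hE : ∀ x y, E x y ≤ 1) (hM : 0 ≤ M)
    {R : A → B → ℝ} {p : A → ℝ} (hw : (R, p) ∈ relaxedCodes) :
    ∃ z ∈ Set.Icc (0 : B → ℝ) 1, ∃ R' : A → B → ℝ, (R', p) ∈ relaxedCodes ∧
      (∀ y, ∑ x, R' x y ≤ 1 / M) ∧ 1 - successProb E R' ≤ lagrangian E M (R, p) z := by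
  classical
  obtain ⟨hR, hp, hRp, hp1⟩ := hw
  choose c hc hcM hcE using fun y ↦
    exists_mul_sum_le (r := fun x ↦ R x y) (fun x ↦ hR x y) (fun x ↦ hE x y)
      (one_div_nonneg.2 hM)
  let z : B → ℝ := fun y ↦ if ∑ x, R x y ≤ 1 / M then 0 else 1
  have hz : ∀ y, z y * (∑ x, R x y - 1 / M) = max (∑ x, R x y - 1 / M) 0 := by
    intro y
    dsimp only [z]
    split_ifs with h
    · rw [zero_mul, max_eq_right (sub_nonpos.2 h)]
    · rw [one_mul, max_eq_left (sub_nonneg.2 (not_le.1 h).le)]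
  refine ⟨z, ⟨fun y ↦ ?_, fun y ↦ ?_⟩, fun x y ↦ c y * R x y,
    ⟨fun x y ↦ mul_nonneg (hc y).1 (hR x y), hp,
      fun x y ↦ (mul_le_of_le_one_left (hR x y) (hc y).2).trans (hRp x y), hp1⟩,
    fun y ↦ by rw [← mul_sum]; exact hcM y, ?_⟩
  · dsimp only [z]; split_ifs <;> norm_num
  · dsimp only [z]; split_ifs <;> norm_num
  have hsucc : ∀ R : A → B → ℝ, successProb E R = ∑ y, ∑ x, E x y * R x y :=
    fun R ↦ sum_comm
  have hcol : ∀ y, ∑ x, E x y * (c y * R x y) = c y * ∑ x, E x y * R x y := fun y ↦ by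
    rw [mul_sum]; exact sum_congr rfl fun x _ ↦ by ring
  simp only [lagrangian, hz, hsucc, hcol]
  have := sum_le_sum fun y (_ : y ∈ univ) ↦ hcE y
  rw [sum_add_distrib] at this
  linarith

lemma lagrangian_smul_add_smul_left (w w' : (A → B → ℝ) × (A → ℝ)) (z : B → ℝ) {a b : ℝ}
    (hab : a + b = 1) :
    lagrangian E M (a • w + b • w') z = a * lagrangian E M w z + b * lagrangian E M w' z := by
  obtain rfl : a = 1 - b := by linarith
  simp only [lagrangian, successProb, Prod.fst_add, Prod.smul_fst, Pi.add_apply, Pi.smul_apply,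
    smul_eq_mul, mul_sub, mul_add, sum_sub_distrib, sum_add_distrib, mul_left_comm _ (1 - b),
    mul_left_comm _ b, ← mul_sum]
  ring

lemma lagrangian_smul_add_smul_right (w : (A → B → ℝ) × (A → ℝ)) (z z' : B → ℝ) {a b : ℝ}
    (hab : a + b = 1) :
    lagrangian E M w (a • z + b • z') = a * lagrangian E M w z + b * lagrangian E M w z' := by
  obtain rfl : a = 1 - b := by linarith
  simp only [lagrangian, Pi.add_apply, Pi.smul_apply, smul_eq_mul, add_mul, sum_add_distrib,
    mul_assoc, ← mul_sum]
  ring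

lemma exists_isSaddlePointOn_lagrangian [Nonempty A] :
    ∃ w ∈ relaxedCodes, ∃ z ∈ Set.Icc (0 : B → ℝ) 1,
      IsSaddlePointOn relaxedCodes (Set.Icc 0 1) (lagrangian E M) w z := by
  have hcont : Continuous fun wz : ((A → B → ℝ) × (A → ℝ)) × (B → ℝ) ↦
      lagrangian E M wz.1 wz.2 := by
    unfold lagrangian successProb; fun_prop
  refine Sion.exists_isSaddlePointOn relaxedCodes_nonempty convex_relaxedCodes
    isCompact_relaxedCodes (fun z _ ↦ ?_) (fun z _ ↦ ?_) (convex_Icc 0 1)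
    (Set.nonempty_Icc.2 zero_le_one) isCompact_Icc (fun w _ ↦ ?_) (fun w _ ↦ ?_)
  · exact (hcont.comp (by fun_prop : Continuous fun w ↦ (w, z))).continuousOn
      |>.lowerSemicontinuousOn
  · exact (convexOn_and_concaveOn_of_map_smul_add_smul convex_relaxedCodes
      fun u v a b hab ↦ lagrangian_smul_add_smul_left u v z hab).1.quasiconvexOn
  · exact (hcont.comp (by fun_prop : Continuous fun z ↦ (w, z))).continuousOn
      |>.upperSemicontinuousOn
  · exact (convexOn_and_concaveOn_of_map_smul_add_smul (convex_Icc 0 1)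
      fun u v a b hab ↦ lagrangian_smul_add_smul_right w u v hab).2.quasiconcaveOn

end NonSignallingCode

open NonSignallingCode in
/-- LP duality for the minimum error probability of
non-signalling codes of size `M`:
`min (1 - ∑ E·R)` over primal-feasible `(R,p)` equals
`max_z min_x ∑_y (min{z_y, E(y|x)} - z_y/M)`. -/
theorem stmt7 {A B : Type*} [Fintype A] [Fintype B] [Nonempty A]
    (E : A → B → ℝ) (hEpos : ∀ x y, 0 ≤ E x y) (hEsum : ∀ x, ∑ y, E x y = 1)
    (M : ℝ) (hM : 1 ≤ M) :
    sInf {e : ℝ | ∃ (R : A → B → ℝ) (p : A → ℝ),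
        (∀ x y, 0 ≤ R x y) ∧ (∀ x, 0 ≤ p x) ∧
        (∀ x y, R x y ≤ p x) ∧ (∑ x, p x = 1) ∧
        (∀ y, ∑ x, R x y ≤ 1 / M) ∧
        e = 1 - ∑ x, ∑ y, E x y * R x y}
    = sSup {v : ℝ | ∃ z : B → ℝ,
        v = ⨅ x : A, ∑ y, (min (z y) (E x y) - z y / M)} := by
  have hE1 : ∀ x y, E x y ≤ 1 := fun x y ↦
    hEsum x ▸ single_le_sum (fun y _ ↦ hEpos x y) (mem_univ y)
  obtain ⟨⟨R₀, p⟩, hw, b, -, hsaddle⟩ :=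
    exists_isSaddlePointOn_lagrangian (E := E) (M := M)
  obtain ⟨z, hz, R, hR, hRM, hRw⟩ :=
    exists_mem_relaxedCodes_le_lagrangian hE1 (zero_le_one.trans hM) hw
  obtain ⟨w₀, hw₀, hw₀b⟩ := exists_lagrangian_le_dualValue (M := M) hEsum b
  have hopt : 1 - successProb E R ≤ dualValue E M b :=
    hRw.trans ((hsaddle w₀ hw₀ z hz).trans hw₀b)
  have hweak : ∀ z {R : A → B → ℝ} {p : A → ℝ}, (R, p) ∈ relaxedCodes →
      (∀ y, ∑ x, R x y ≤ 1 / M) → dualValue E M z ≤ 1 - successProb E R :=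
    dualValue_le_one_sub_successProb hEpos hEsum hM
  rw [IsLeast.csInf_eq (a := 1 - successProb E R),
    IsGreatest.csSup_eq (a := dualValue E M b)]
  · exact le_antisymm hopt (hweak b hR hRM)
  · exact ⟨⟨b, rfl⟩, by rintro _ ⟨z, rfl⟩; exact (hweak z hR hRM).trans hopt⟩
  · refine ⟨⟨R, p, hR.1, hR.2.1, hR.2.2.1, hR.2.2.2, hRM, rfl⟩, ?_⟩
    rintro _ ⟨R', p', h0, hp, hRp, hp1, hR'M, rfl⟩
    exact hopt.trans (hweak b ⟨h0, hp, hRp, hp1⟩ hR'M)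
end

section
/- Every fractional covering of the channel hypergraph yields a feasible point of the dual LP for M♭(0,E): if c : B → ℝ≥0 satisfies ∑_{y : E(y|x) > 0} c(y) ≥ 1 for all x, and ζ is chosen so that ζ·E(y|x) ≥ c(y) whenever E(y|x) > 0, then V(x,y) := max{0, ζE(y|x) − c(y)} satisfies V(x,y) + c(y) ≥ ζE(y|x) for all x,y and ∑_y V(x,y) ≤ ζ − 1 for all x. Hence M♭(0,E) ≤ ω*(H(E)). -/
/-- Every fractional covering of the channel hypergraph yields
a feasible point of the dual LP for `M♭(0,E)`; hence `M♭(0,E) ≤ ω*(H(E))`. -/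
theorem stmt12 {A B : Type*} [Fintype A] [Fintype B]
    (E : A → B → ℝ) (hEpos : ∀ x y, 0 ≤ E x y) (hEsum : ∀ x, ∑ y, E x y = 1)
    (c : B → ℝ) (hc0 : ∀ y, 0 ≤ c y)
    (hcov : ∀ x, 1 ≤ ∑ y, (if 0 < E x y then c y else 0))
    (ζ : ℝ) (hζ : ∀ x y, 0 < E x y → c y ≤ ζ * E x y) :
    ∀ V : A → B → ℝ, (∀ x y, V x y = max 0 (ζ * E x y - c y)) →
      (∀ x y, 0 ≤ V x y) ∧
      (∀ x y, ζ * E x y ≤ V x y + c y) ∧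
      (∀ x, ∑ y, V x y ≤ ζ - 1) ∧
      sInf {s : ℝ | ∃ (V' : A → B → ℝ) (c' : B → ℝ) (ζ' : ℝ),
          (∀ x y, 0 ≤ V' x y) ∧ (∀ y, 0 ≤ c' y) ∧
          (∀ x y, ζ' * E x y ≤ V' x y + c' y) ∧
          (∀ x, ∑ y, V' x y ≤ ζ' - 1) ∧
          s = ∑ y, c' y} ≤ ∑ y, c y := by
  intro V hV
  have hVnn : ∀ x y, 0 ≤ V x y := fun x y => by rw [hV]; exact le_max_left _ _
  have hfeas2 : ∀ x y, ζ * E x y ≤ V x y + c y := fun x y => by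
    rw [hV]
    have := le_max_right 0 (ζ * E x y - c y)
    linarith
  have hfeas3 : ∀ x, ∑ y, V x y ≤ ζ - 1 := by
    intro x
    have hVeq : ∀ y, V x y = (if 0 < E x y then ζ * E x y else 0)
        - (if 0 < E x y then c y else 0) := by
      intro y
      rw [hV]
      by_cases h : 0 < E x y
      · simp [h, max_eq_right (sub_nonneg.2 (hζ x y h))]
      · have hE0 : E x y = 0 := le_antisymm (not_lt.1 h) (hEpos x y)
        simp [h, hE0, max_eq_left, hc0 y]
    have h1 : ∑ y, (if 0 < E x y then ζ * E x y else 0) = ζ := by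
      have : ∀ y : B, (if 0 < E x y then ζ * E x y else 0) = ζ * E x y := by
        intro y
        by_cases h : 0 < E x y
        · simp [h]
        · have hE0 : E x y = 0 := le_antisymm (not_lt.1 h) (hEpos x y)
          simp [h, hE0]
      rw [Finset.sum_congr rfl (fun y _ => this y), ← Finset.mul_sum, hEsum x, mul_one]
    calc ∑ y, V x y = ∑ y, ((if 0 < E x y then ζ * E x y else 0)
          - (if 0 < E x y then c y else 0)) := Finset.sum_congr rfl fun y _ => hVeq y
      _ = ζ - ∑ y, (if 0 < E x y then c y else 0) := by rw [Finset.sum_sub_distrib, h1]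
      _ ≤ ζ - 1 := by linarith [hcov x]
  refine ⟨hVnn, hfeas2, hfeas3, ?_⟩
  apply csInf_le
  · exact ⟨0, fun s hs => by
      obtain ⟨V', c', ζ', _, hc', _, _, rfl⟩ := hs
      exact Finset.sum_nonneg fun y _ => hc' y⟩
  · exact ⟨V, c, ζ, hVnn, hc0, hfeas2, hfeas3, rfl⟩
end

section
/- The zero-error non-signalling LP value equals the fractional packing number: M♭(0,E) = α*(H(E)) = ω*(H(E)), where M♭(0,E) is the optimal value of the LP max ∑_x v(x) subject to 0 ≤ F(x,y) ≤ v(x), ∑_x F(x,y) ≤ 1 for all y, and ∑_{x,y} E(y|x)F(x,y) ≥ ∑_x v(x). -/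
/-!
On the support of `E` a zero-error non-signalling strategy must have `F x y = v x`: otherwise the
success constraint `∑ v ≤ ∑ E F`, together with `F ≤ v` and `∑_y E x y = 1`, would be violated.
Hence its feasible values are exactly the fractional packings of `H(E)`. The equality of the
fractional packing and covering numbers is LP duality for `max 1ᵀv` subject to `vᵀM ≤ 1, v ≥ 0`,
where `M` is the incidence matrix of `H(E)`. For strong duality, separate `(1, p)`, with `p` the
packing optimum, from the open convex set of pairs `(b, t)` strictly dominated by `(vᵀM, ∑ v)` for
some `v ≥ 0`; the separating functional `(b, t) ↦ tγ - b·c` has `c ≥ 0` and `γ > 0`, and `c / γ`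
is a fractional covering of value at most `p`.
-/

open Finset Matrix Filter Topology Pointwise

lemma nonpos_of_forall_pos_add_mul_lt {a b C : ℝ} (h : ∀ s : ℝ, 0 < s → a + s * b < C) :
    b ≤ 0 := by
  by_contra! hb
  have := h ((|C - a| + 1) / b) (by positivity)
  rw [div_mul_cancel₀ _ hb.ne'] at this
  linarith [le_abs_self (C - a)]

lemma nonneg_of_forall_pos_mul_lt {a C : ℝ} (h : ∀ s : ℝ, 0 < s → s * a < C) : 0 ≤ C := by
  have hlim : Tendsto (fun s : ℝ => s * a) (𝓝[>] 0) (𝓝 0) :=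
    tendsto_nhdsWithin_of_tendsto_nhds
      ((continuous_id.mul continuous_const).tendsto' (0 : ℝ) 0 (zero_mul a))
  exact le_of_tendsto hlim (eventually_nhdsWithin_of_forall fun s hs => (h s hs).le)

namespace Matrix

def packingValues {A B : Type*} [Fintype A] (M : Matrix A B ℝ) : Set ℝ :=
  {s | ∃ v : A → ℝ, 0 ≤ v ∧ v ᵥ* M ≤ 1 ∧ s = ∑ x, v x}

def coveringValues {A B : Type*} [Fintype B] (M : Matrix A B ℝ) : Set ℝ :=
  {s | ∃ c : B → ℝ, 0 ≤ c ∧ 1 ≤ M *ᵥ c ∧ s = ∑ y, c y}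

variable {A B : Type*} [Fintype A] [Fintype B] {M : Matrix A B ℝ}

lemma le_of_mem_packingValues_of_mem_coveringValues {s t : ℝ} (hs : s ∈ M.packingValues)
    (ht : t ∈ M.coveringValues) : s ≤ t := by
  obtain ⟨v, hv, hvM, rfl⟩ := hs
  obtain ⟨c, hc, hMc, rfl⟩ := ht
  calc ∑ x, v x = v ⬝ᵥ 1 := (dotProduct_one v).symm
    _ ≤ v ⬝ᵥ (M *ᵥ c) := dotProduct_le_dotProduct_of_nonneg_left hMc hv
    _ = (v ᵥ* M) ⬝ᵥ c := dotProduct_mulVec v M c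
    _ ≤ 1 ⬝ᵥ c := dotProduct_le_dotProduct_of_nonneg_right hvM hc
    _ = ∑ y, c y := one_dotProduct c

lemma exists_separating_weights {p : ℝ} (hp : p ∈ upperBounds M.packingValues) :
    ∃ (c : B → ℝ) (γ : ℝ), ∀ v : A → ℝ, 0 ≤ v → ∀ (b : B → ℝ) (t : ℝ),
      (∀ y, (v ᵥ* M) y < b y) → t < ∑ x, v x → t * γ - b ⬝ᵥ c < p * γ - ∑ y, c y := by
  classical
  let φ : (A → ℝ) →ₗ[ℝ] (B → ℝ) × ℝ :=
    { toFun v := (v ᵥ* M, ∑ x, v x)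
      map_add' v w := by simp [add_vecMul, sum_add_distrib]
      map_smul' a v := by simp [smul_vecMul, mul_sum] }
  let S := φ '' Set.Ici 0 + (Set.univ.pi fun _ => Set.Ioi 0) ×ˢ Set.Iio 0
  have hS_conv : Convex ℝ S :=
    ((convex_Ici 0).linear_image φ).add ((convex_pi fun _ _ => convex_Ioi 0).prod (convex_Iio 0))
  have hS_open : IsOpen S :=
    ((isOpen_set_pi Set.finite_univ fun _ _ => isOpen_Ioi).prod isOpen_Iio).add_left
  have hx₀ : ((1 : B → ℝ), p) ∉ S := by
    rintro ⟨_, ⟨v, hv, rfl⟩, o, ⟨ho₁, ho₂⟩, h⟩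
    simp only [Set.mem_pi, Set.mem_univ, Set.mem_Ioi, forall_const] at ho₁
    rw [Set.mem_Iio] at ho₂
    simp only [φ, LinearMap.coe_mk, AddHom.coe_mk, Prod.ext_iff, Prod.fst_add, Prod.snd_add] at h
    have hpack : ∑ x, v x ∈ M.packingValues :=
      ⟨v, hv, fun y => by linarith [ho₁ y, congrFun h.1 y, Pi.add_apply (v ᵥ* M) o.1 y], rfl⟩
    linarith [hp hpack]
  obtain ⟨f, hf⟩ := geometric_hahn_banach_open_point hS_conv hS_open hx₀
  have hf_apply (b : B → ℝ) (t : ℝ) :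
      f (b, t) = t * f (0, 1) - b ⬝ᵥ fun y => -f (Pi.single y 1, 0) := by
    have hbt : (b, t) = ∑ y, b y • (Pi.single y 1, 0) + t • ((0 : B → ℝ), (1 : ℝ)) := by
      ext y <;> simp [Prod.fst_sum, Prod.snd_sum, Finset.sum_apply, Pi.single_apply]
    rw [hbt, map_add, map_sum]
    simp only [map_smul, smul_eq_mul, dotProduct, mul_neg, sum_neg_distrib, sub_neg_eq_add]
    ring
  refine ⟨fun y => -f (Pi.single y 1, 0), f (0, 1), fun v hv b t hb ht => ?_⟩
  have hmem : (b, t) ∈ S := ⟨φ v, ⟨v, hv, rfl⟩, (b, t) - φ v, ⟨?_, ?_⟩, add_sub_cancel _ _⟩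
  · have := hf _ hmem
    rwa [hf_apply b t, hf_apply 1 p, one_dotProduct] at this
  · simpa [φ] using hb
  · simpa [φ] using ht

lemma exists_mem_coveringValues_le {p : ℝ} (hp : p ∈ upperBounds M.packingValues) :
    ∃ t ∈ M.coveringValues, t ≤ p := by
  classical
  obtain ⟨c, γ, hsep⟩ := exists_separating_weights hp
  have hsep₀ (b : B → ℝ) (t : ℝ) (hb : ∀ y, 0 < b y) (ht : t < 0) :
      t * γ - b ⬝ᵥ c < p * γ - ∑ y, c y :=
    hsep 0 le_rfl b t (by simpa using hb) (by simpa using ht)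
  -- `hc`, `hcover` and `hvalue` come from rays in the separated set, as `s → ∞`, `∞` and `0`.
  have hc : 0 ≤ c := fun y => by
    refine neg_nonpos.mp (nonpos_of_forall_pos_add_mul_lt (a := -γ - ∑ y, c y)
      (C := p * γ - ∑ y, c y) fun s hs => ?_)
    have := hsep₀ (1 + s • Pi.single y 1) (-1) (fun y' => by
      simp only [Pi.add_apply, Pi.one_apply, Pi.smul_apply, smul_eq_mul]
      rcases eq_or_ne y' y with rfl | h <;> simp [*]; positivity) (by norm_num)
    simp only [add_dotProduct, smul_dotProduct, single_dotProduct, one_dotProduct, smul_eq_mul,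
      one_mul] at this
    linarith
  have hcover (x : A) : γ ≤ M x ⬝ᵥ c := by
    refine sub_nonpos.mp (nonpos_of_forall_pos_add_mul_lt (a := -γ - ∑ y, c y)
      (C := p * γ - ∑ y, c y) fun s hs => ?_)
    have := hsep (Pi.single x s) (Pi.single_nonneg.mpr hs.le) (1 + s • M x) (s - 1)
      (fun y => by simp [single_vecMul]) (by simp)
    simp only [add_dotProduct, smul_dotProduct, one_dotProduct, smul_eq_mul] at this
    linarith
  have hvalue : ∑ y, c y ≤ p * γ := by
    refine sub_nonneg.mp (nonneg_of_forall_pos_mul_lt (a := -γ - ∑ y, c y) fun s hs => ?_)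
    have := hsep₀ (s • 1) (-s) (fun _ => by simpa using hs) (by simpa using hs)
    simp only [smul_dotProduct, one_dotProduct, smul_eq_mul] at this
    linarith
  have hγ : 0 < γ := by
    have hp₀ : 0 ≤ p := hp ⟨0, le_rfl, by simp, by simp⟩
    have := hsep₀ ((1 / 2 : ℝ) • 1) (-1) (fun _ => by norm_num) (by norm_num)
    simp only [smul_dotProduct, one_dotProduct, smul_eq_mul] at this
    nlinarith [sum_nonneg fun y (_ : y ∈ univ) => hc y]
  refine ⟨∑ y, γ⁻¹ * c y, ⟨γ⁻¹ • c, smul_nonneg (inv_nonneg.mpr hγ.le) hc, fun x => ?_, rfl⟩, ?_⟩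
  · change 1 ≤ M x ⬝ᵥ (γ⁻¹ • c)
    rw [dotProduct_smul, smul_eq_mul, le_inv_mul_iff₀ hγ, mul_one]
    exact hcover x
  · rw [← mul_sum, inv_mul_le_iff₀ hγ, mul_comm]
    exact hvalue

theorem isLeast_coveringValues (hC : M.coveringValues.Nonempty) :
    IsLeast M.coveringValues (sSup M.packingValues) := by
  obtain ⟨t₀, ht₀⟩ := hC
  have hP_bdd : BddAbove M.packingValues :=
    ⟨t₀, fun s hs => le_of_mem_packingValues_of_mem_coveringValues hs ht₀⟩
  have hP_ne : M.packingValues.Nonempty := ⟨0, 0, le_rfl, by simp, by simp⟩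
  obtain ⟨t, ht, htp⟩ := exists_mem_coveringValues_le fun s hs => le_csSup hP_bdd hs
  have hlower : sSup M.packingValues ∈ lowerBounds M.coveringValues := fun t ht =>
    csSup_le hP_ne fun s hs => le_of_mem_packingValues_of_mem_coveringValues hs ht
  exact ⟨le_antisymm htp (hlower ht) ▸ ht, hlower⟩

end Matrix

section SupportHypergraph

variable {A B : Type*}

/-- The incidence matrix of the hypergraph `H(E)`: column `y` is the indicator of `e_y`. -/
noncomputable def supportMatrix (E : A → B → ℝ) : Matrix A B ℝ :=
  Matrix.of fun x y => if 0 < E x y then 1 else 0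

lemma packingValues_supportMatrix [Fintype A] (E : A → B → ℝ) :
    (supportMatrix E).packingValues = {s : ℝ | ∃ v : A → ℝ, (∀ x, 0 ≤ v x) ∧
      (∀ y, ∑ x, (if 0 < E x y then v x else 0) ≤ 1) ∧ s = ∑ x, v x} := by
  simp only [packingValues, supportMatrix, Pi.le_def, vecMul, dotProduct, of_apply, mul_boole,
    Pi.zero_apply, Pi.one_apply]

lemma coveringValues_supportMatrix [Fintype B] (E : A → B → ℝ) :
    (supportMatrix E).coveringValues = {s : ℝ | ∃ c : B → ℝ, (∀ y, 0 ≤ c y) ∧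
      (∀ x, 1 ≤ ∑ y, (if 0 < E x y then c y else 0)) ∧ s = ∑ y, c y} := by
  simp only [coveringValues, supportMatrix, Pi.le_def, mulVec, dotProduct, of_apply, boole_mul,
    Pi.zero_apply, Pi.one_apply]

lemma coveringValues_supportMatrix_nonempty [Fintype B] {E : A → B → ℝ}
    (hEsum : ∀ x, ∑ y, E x y = 1) : (supportMatrix E).coveringValues.Nonempty := by
  rw [coveringValues_supportMatrix]
  refine ⟨_, fun _ => 1, fun _ => zero_le_one, fun x => ?_, rfl⟩
  obtain ⟨y, -, hy⟩ := exists_lt_of_sum_lt (s := univ) (f := 0) (g := E x) (by simp [hEsum x])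
  calc (1 : ℝ) = if 0 < E x y then 1 else 0 := (if_pos hy).symm
    _ ≤ ∑ y, if 0 < E x y then (1 : ℝ) else 0 :=
      single_le_sum (f := fun y => if 0 < E x y then (1 : ℝ) else 0)
        (fun y _ => ite_nonneg zero_le_one le_rfl) (mem_univ y)

def zeroErrorNSValues [Fintype A] [Fintype B] (E : A → B → ℝ) : Set ℝ :=
  {s : ℝ | ∃ (F : A → B → ℝ) (v : A → ℝ),
    (∀ x y, 0 ≤ F x y) ∧ (∀ x, 0 ≤ v x) ∧ (∀ x y, F x y ≤ v x) ∧ (∀ y, ∑ x, F x y ≤ 1) ∧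
    (∑ x, v x ≤ ∑ x, ∑ y, E x y * F x y) ∧ s = ∑ x, v x}

lemma eq_of_pos_of_sum_le_sum_mul [Fintype A] [Fintype B] {E F : A → B → ℝ} {v : A → ℝ}
    (hEpos : ∀ x y, 0 ≤ E x y) (hEsum : ∀ x, ∑ y, E x y = 1) (hFv : ∀ x y, F x y ≤ v x)
    (hsum : ∑ x, v x ≤ ∑ x, ∑ y, E x y * F x y) {x : A} {y : B} (hxy : 0 < E x y) :
    F x y = v x := by
  have hterm (x : A) (y : B) : 0 ≤ E x y * (v x - F x y) :=
    mul_nonneg (hEpos x y) (sub_nonneg.mpr (hFv x y))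
  have htotal : ∑ x, ∑ y, E x y * (v x - F x y) = 0 := by
    refine le_antisymm ?_ (sum_nonneg fun x _ => sum_nonneg fun y _ => hterm x y)
    simp only [mul_sub, sum_sub_distrib, ← sum_mul, hEsum, one_mul]
    linarith
  rw [sum_eq_zero_iff_of_nonneg fun x _ => sum_nonneg fun y _ => hterm x y] at htotal
  have := (sum_eq_zero_iff_of_nonneg fun y _ => hterm x y).mp (htotal x (mem_univ x)) y (mem_univ y)
  linarith [(mul_eq_zero.mp this).resolve_left hxy.ne']

lemma zeroErrorNSValues_eq_packingValues [Fintype A] [Fintype B] {E : A → B → ℝ}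
    (hEpos : ∀ x y, 0 ≤ E x y) (hEsum : ∀ x, ∑ y, E x y = 1) :
    zeroErrorNSValues E = (supportMatrix E).packingValues := by
  rw [packingValues_supportMatrix]
  ext s
  constructor
  · rintro ⟨F, v, hF, hv, hFv, hcol, hsum, rfl⟩
    refine ⟨v, hv, fun y => ?_, rfl⟩
    calc ∑ x, (if 0 < E x y then v x else 0)
        = ∑ x, (if 0 < E x y then F x y else 0) := by
          refine sum_congr rfl fun x _ => ?_
          split_ifs with hxy
          · exact (eq_of_pos_of_sum_le_sum_mul hEpos hEsum hFv hsum hxy).symm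
          · rfl
      _ ≤ ∑ x, F x y := sum_le_sum fun x _ => by split_ifs <;> simp [hF x y]
      _ ≤ 1 := hcol y
  · rintro ⟨v, hv, hpack, rfl⟩
    refine ⟨fun x y => if 0 < E x y then v x else 0, v, fun x y => ite_nonneg (hv x) le_rfl, hv,
      fun x y => ?_, hpack, le_of_eq ?_, rfl⟩
    · dsimp only
      split_ifs <;> simp [hv x]
    · refine sum_congr rfl fun x _ => ?_
      have (y : B) : E x y * (if 0 < E x y then v x else 0) = E x y * v x := by
        split_ifs with hxy
        · rfl
        · rw [le_antisymm (not_lt.mp hxy) (hEpos x y), zero_mul, zero_mul]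
      simp only [this, ← sum_mul, hEsum, one_mul]

end SupportHypergraph

/-- The zero-error non-signalling LP value equals the
fractional packing number, which equals the fractional covering number:
`M♭(0,E) = α*(H(E)) = ω*(H(E))`. -/
theorem stmt13 {A B : Type*} [Fintype A] [Fintype B]
    (E : A → B → ℝ) (hEpos : ∀ x y, 0 ≤ E x y) (hEsum : ∀ x, ∑ y, E x y = 1) :
    sSup {s : ℝ | ∃ (F : A → B → ℝ) (v : A → ℝ),
        (∀ x y, 0 ≤ F x y) ∧ (∀ x, 0 ≤ v x) ∧
        (∀ x y, F x y ≤ v x) ∧ (∀ y, ∑ x, F x y ≤ 1) ∧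
        (∑ x, v x ≤ ∑ x, ∑ y, E x y * F x y) ∧
        s = ∑ x, v x}
      = sSup {s : ℝ | ∃ v : A → ℝ, (∀ x, 0 ≤ v x) ∧
          (∀ y, ∑ x, (if 0 < E x y then v x else 0) ≤ 1) ∧
          s = ∑ x, v x}
    ∧ sSup {s : ℝ | ∃ v : A → ℝ, (∀ x, 0 ≤ v x) ∧
          (∀ y, ∑ x, (if 0 < E x y then v x else 0) ≤ 1) ∧
          s = ∑ x, v x}
      = sInf {s : ℝ | ∃ c : B → ℝ, (∀ y, 0 ≤ c y) ∧
          (∀ x, 1 ≤ ∑ y, (if 0 < E x y then c y else 0)) ∧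
          s = ∑ y, c y} := by
  rw [← packingValues_supportMatrix, ← coveringValues_supportMatrix]
  exact ⟨congrArg sSup (zeroErrorNSValues_eq_packingValues hEpos hEsum),
    ((supportMatrix E).isLeast_coveringValues
      (coveringValues_supportMatrix_nonempty hEsum)).csInf_eq.symm⟩
end

section
/- If a capacity-achieving input distribution p (with output distribution q and capacity C) satisfies E(y|x) = ⌈E(y|x)⌉·q(y)·2^C whenever p(x) > 0, then v(x) := p(x)·2^C is a fractional packing of the channel hypergraph restricted to the support of p with total weight 2^C: for every y with q(y) > 0, ∑_{x : E(y|x) > 0} p(x)·2^C = 1, and for every y with q(y) = 0, ∑_{x : E(y|x) > 0} p(x)·2^C = 0. Hence α*(H(E)) ≥ 2^C. -/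
/-- If the zero-dispersion condition
`E(y|x) = ⌈E(y|x)⌉ q(y) 2^C` holds on the support of a capacity-achieving
distribution `p`, then `v(x) := p(x)·2^C` is a fractional packing of the
channel hypergraph with total weight `2^C`; hence `α*(H(E)) ≥ 2^C`. -/
theorem stmt16 {A B : Type*} [Fintype A] [Fintype B]
    (E : A → B → ℝ) (hEpos : ∀ x y, 0 ≤ E x y) (hEsum : ∀ x, ∑ y, E x y = 1)
    (p : A → ℝ) (hp0 : ∀ x, 0 ≤ p x) (hp1 : ∑ x, p x = 1)
    (q : B → ℝ) (hq : ∀ y, q y = ∑ x, E x y * p x) (C : ℝ)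
    (hdisp : ∀ x y, 0 < p x →
      E x y = (if 0 < E x y then (1:ℝ) else 0) * q y * (2:ℝ) ^ C) :
    (∀ y, 0 < q y → ∑ x, (if 0 < E x y then p x * (2:ℝ) ^ C else 0) = 1) ∧
    (∀ y, q y = 0 → ∑ x, (if 0 < E x y then p x * (2:ℝ) ^ C else 0) = 0) ∧
    (2:ℝ) ^ C ≤ sSup {s : ℝ | ∃ v : A → ℝ, (∀ x, 0 ≤ v x) ∧
        (∀ y, ∑ x, (if 0 < E x y then v x else 0) ≤ 1) ∧
        s = ∑ x, v x} := by
  have part1 : ∀ y, 0 < q y → ∑ x, (if 0 < E x y then p x * (2:ℝ) ^ C else 0) = 1 := by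
    intro y hqy
    have hq0 : q y ≠ 0 := hqy.ne'
    have key : ∀ x, (if 0 < E x y then p x * (2:ℝ) ^ C else 0) = E x y * p x / q y := by
      intro x
      rcases eq_or_lt_of_le (hp0 x) with hpx | hpx
      · simp [← hpx]
      · by_cases hE : 0 < E x y
        · have hE' := hdisp x y hpx
          rw [if_pos hE, one_mul] at hE'
          rw [if_pos hE, hE']
          field_simp
        · have h0 : E x y = 0 := le_antisymm (not_lt.1 hE) (hEpos x y)
          simp [hE, h0]
    rw [Finset.sum_congr rfl (fun x _ => key x), ← Finset.sum_div, ← hq, div_self hq0]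
  have part2 : ∀ y, q y = 0 → ∑ x, (if 0 < E x y then p x * (2:ℝ) ^ C else 0) = 0 := by
    intro y hqy
    have hsum : ∑ x, E x y * p x = 0 := (hq y).symm.trans hqy
    have hall : ∀ x ∈ Finset.univ, E x y * p x = 0 :=
      (Finset.sum_eq_zero_iff_of_nonneg
        (fun x _ => mul_nonneg (hEpos x y) (hp0 x))).1 hsum
    refine Finset.sum_eq_zero fun x _ => ?_
    by_cases hE : 0 < E x y
    · have hpx : p x = 0 := by
        have := hall x (Finset.mem_univ x)
        rcases mul_eq_zero.1 this with h | h
        · exact absurd h hE.ne'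
        · exact h
      simp [hE, hpx]
    · simp [hE]
  refine ⟨part1, part2, ?_⟩
  have hqnn : ∀ y, 0 ≤ q y := fun y => by
    rw [hq]; exact Finset.sum_nonneg fun x _ => mul_nonneg (hEpos x y) (hp0 x)
  apply le_csSup
  · refine ⟨Fintype.card A, ?_⟩
    rintro s ⟨v, hv0, hv1, rfl⟩
    have hvx : ∀ x, v x ≤ 1 := by
      intro x
      obtain ⟨y, hy⟩ : ∃ y, 0 < E x y := by
        by_contra h
        push_neg at h
        have h0 : ∑ y, E x y = 0 :=
          Finset.sum_eq_zero fun y _ => le_antisymm (h y) (hEpos x y)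
        rw [hEsum x] at h0; norm_num at h0
      calc v x = (if 0 < E x y then v x else 0) := by rw [if_pos hy]
        _ ≤ ∑ x', (if 0 < E x' y then v x' else 0) :=
            Finset.single_le_sum (f := fun x' => if 0 < E x' y then v x' else 0)
              (fun x' _ => by by_cases h : 0 < E x' y <;> simp [h, hv0 x'])
              (Finset.mem_univ x)
        _ ≤ 1 := hv1 y
    calc ∑ x, v x ≤ ∑ _x : A, (1:ℝ) := Finset.sum_le_sum fun x _ => hvx x
      _ = Fintype.card A := by simp
  · refine ⟨fun x => p x * (2:ℝ) ^ C, fun x => mul_nonneg (hp0 x) (by positivity), fun y => ?_, ?_⟩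
    · rcases (hqnn y).eq_or_lt with h | h
      · rw [part2 y h.symm]; norm_num
      · rw [part1 y h]
    · rw [← Finset.sum_mul, hp1, one_mul]
end

section
/- Mutual information upper-bounds the log fractional packing value at a fixed input distribution: for any probability distribution p on A, I(E,p) ≥ log α*(E,p), where α*(E,p) := 1 / max_y ∑_{x : E(y|x) > 0} p(x). -/
/-!
Let `S(y) = ∑_{x : E(y|x) > 0} p(x)` and `M = max_y S(y)`. The weights `b(x,y) = p(x) q(y) / M`
on the support of `E`, and `0` off it, form a sub-probability on `A × B`: their total mass is
`∑_y q(y) S(y) / M ≤ ∑_y q(y) = 1`. The joint law `p(x) E(y|x)` is carried by the support of `b`,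
so Gibbs' inequality (from `log t ≥ 1 - 1/t`) makes its relative entropy to `b` nonnegative, and
that relative entropy equals `I(E,p) + log M` (in nats).
-/

open Real Finset

theorem sub_le_mul_log_div {a b : ℝ} (ha : 0 ≤ a) (hb : 0 ≤ b) (hab : 0 < a → 0 < b) :
    a - b ≤ a * log (a / b) := by
  rcases ha.eq_or_lt with rfl | ha
  · simpa using hb
  have hb := hab ha
  calc a - b = a * (1 - (a / b)⁻¹) := by field_simp
    _ ≤ a * log (a / b) := by gcongr; exact one_sub_inv_le_log_of_pos (div_pos ha hb)

theorem sum_mul_log_div_nonneg_of_sum_le {ι : Type*} (s : Finset ι) {a b : ι → ℝ}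
    (ha : ∀ i ∈ s, 0 ≤ a i) (hb : ∀ i ∈ s, 0 ≤ b i) (hab : ∀ i ∈ s, 0 < a i → 0 < b i)
    (hsum : ∑ i ∈ s, b i ≤ ∑ i ∈ s, a i) :
    0 ≤ ∑ i ∈ s, a i * log (a i / b i) := by
  have := sum_le_sum fun i hi => sub_le_mul_log_div (ha i hi) (hb i hi) (hab i hi)
  rw [sum_sub_distrib] at this
  linarith

theorem log_div_ite_eq {p e q M : ℝ} (he : 0 < e) (hp : p ≠ 0) (hq : q ≠ 0) (hM : M ≠ 0) :
    log (p * e / (if 0 < e then p * q / M else 0)) = log (e / q) + log M := by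
  rw [if_pos he, ← log_mul (by positivity) hM]
  congr 1
  field_simp

theorem exists_pos_of_sum_eq_one {ι : Type*} [Fintype ι] {f : ι → ℝ} (hf : ∑ i, f i = 1) :
    ∃ i, 0 < f i := by
  obtain ⟨i, -, hi⟩ := exists_lt_of_sum_lt (s := univ) (f := 0) (g := f) (by simp [hf])
  exact ⟨i, hi⟩

section Channel

variable {A B : Type*} [Fintype A] [Fintype B]

/-- `1 / ⨆ y, supportMass E p y` is the fractional packing value `α*(E, p)`. -/
noncomputable def supportMass (E : A → B → ℝ) (p : A → ℝ) (y : B) : ℝ :=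
  ∑ x, if 0 < E x y then p x else 0

variable {E : A → B → ℝ} {p : A → ℝ} {q : B → ℝ}

theorem supportMass_le_iSup (y : B) : supportMass E p y ≤ ⨆ y, supportMass E p y :=
  le_ciSup (Set.finite_range _).bddAbove y

theorem iSup_supportMass_pos (hEsum : ∀ x, ∑ y, E x y = 1)
    (hp0 : ∀ x, 0 ≤ p x) (hp1 : ∑ x, p x = 1) :
    0 < ⨆ y, supportMass E p y := by
  obtain ⟨x, hx⟩ := exists_pos_of_sum_eq_one hp1
  obtain ⟨y, hy⟩ := exists_pos_of_sum_eq_one (hEsum x)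
  calc 0 < p x := hx
    _ ≤ supportMass E p y := by
        simpa [supportMass, hy] using single_le_sum (f := fun x' => if 0 < E x' y then p x' else 0)
          (fun x' _ => by split_ifs <;> simp [hp0]) (mem_univ x)
    _ ≤ _ := supportMass_le_iSup y

theorem sum_ite_mul_div_iSup_supportMass_le (hq0 : ∀ y, 0 ≤ q y)
    (hM : 0 < ⨆ y, supportMass E p y) :
    ∑ x, ∑ y, (if 0 < E x y then p x * q y / ⨆ y, supportMass E p y else 0) ≤ ∑ y, q y := by
  set M := ⨆ y, supportMass E p y
  calc ∑ x, ∑ y, (if 0 < E x y then p x * q y / M else 0)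
      = ∑ y, q y / M * supportMass E p y := by
        rw [sum_comm]
        refine sum_congr rfl fun y _ => ?_
        simp only [supportMass, mul_sum]
        exact sum_congr rfl fun x _ => by split_ifs <;> ring
    _ ≤ ∑ y, q y / M * M := by
        gcongr with y
        · exact div_nonneg (hq0 y) hM.le
        · exact supportMass_le_iSup y
    _ = ∑ y, q y := by simp [hM.ne']

theorem neg_log_iSup_supportMass_le (hEpos : ∀ x y, 0 ≤ E x y) (hEsum : ∀ x, ∑ y, E x y = 1)
    (hp0 : ∀ x, 0 ≤ p x) (hp1 : ∑ x, p x = 1) (hq : ∀ y, q y = ∑ x, E x y * p x) :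
    -log (⨆ y, supportMass E p y) ≤ ∑ x, ∑ y, p x * E x y * log (E x y / q y) := by
  set M := ⨆ y, supportMass E p y
  have hM : 0 < M := iSup_supportMass_pos hEsum hp0 hp1
  have hq_ge (x : A) (y : B) : E x y * p x ≤ q y := hq y ▸
    single_le_sum (f := fun x' => E x' y * p x') (fun x' _ => mul_nonneg (hEpos x' y) (hp0 x'))
      (mem_univ x)
  have hq0 (y : B) : 0 ≤ q y := hq y ▸ sum_nonneg fun x _ => mul_nonneg (hEpos x y) (hp0 x)
  have hpos (x : A) (y : B) (h : 0 < p x * E x y) : 0 < p x ∧ 0 < E x y ∧ 0 < q y := by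
    obtain ⟨hpx, hExy⟩ := (pos_and_pos_or_neg_and_neg_of_mul_pos h).resolve_right
      fun ⟨hpx, _⟩ => (hp0 x).not_gt hpx
    exact ⟨hpx, hExy, (mul_pos hExy hpx).trans_le (hq_ge x y)⟩
  have hjoint : ∑ x, ∑ y, p x * E x y = 1 := by simp [← mul_sum, hEsum, hp1]
  have hq1 : ∑ y, q y = 1 := by
    simp only [hq]
    rw [sum_comm]
    simp [← sum_mul, hEsum, hp1]
  set a : A × B → ℝ := fun z => p z.1 * E z.1 z.2
  set b : A × B → ℝ := fun z => if 0 < E z.1 z.2 then p z.1 * q z.2 / M else 0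
  have hsum_b : ∑ z, b z ≤ 1 := by
    rw [Fintype.sum_prod_type, ← hq1]
    exact sum_ite_mul_div_iSup_supportMass_le hq0 hM
  have hgibbs : 0 ≤ ∑ z, a z * log (a z / b z) := by
    refine sum_mul_log_div_nonneg_of_sum_le univ (fun z _ => ?_) (fun z _ => ?_) (fun z _ h => ?_)
      (hsum_b.trans (by rw [Fintype.sum_prod_type]; exact hjoint.ge))
    · exact mul_nonneg (hp0 _) (hEpos _ _)
    · dsimp only [b]
      split_ifs
      exacts [div_nonneg (mul_nonneg (hp0 _) (hq0 _)) hM.le, le_rfl]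
    · obtain ⟨hpx, hExy, hqy⟩ := hpos z.1 z.2 h
      simp only [b, if_pos hExy]
      positivity
  have hterm (x : A) (y : B) : a (x, y) * log (a (x, y) / b (x, y))
      = p x * E x y * log (E x y / q y) + p x * E x y * log M := by
    by_cases h : 0 < p x * E x y
    · obtain ⟨hpx, hExy, hqy⟩ := hpos x y h
      simp only [a, b, log_div_ite_eq hExy hpx.ne' hqy.ne' hM.ne']
      ring
    · have h0 : p x * E x y = 0 := (not_lt.mp h).antisymm (mul_nonneg (hp0 x) (hEpos x y))
      simp [a, h0]
  have hsplit : ∑ z, a z * log (a z / b z)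
      = ∑ x, ∑ y, p x * E x y * log (E x y / q y) + log M := by
    simp only [Fintype.sum_prod_type, hterm, sum_add_distrib, ← sum_mul, hjoint, one_mul]
  linarith

end Channel

theorem stmt17_general {A B : Type*} [Fintype A] [Fintype B]
    (E : A → B → ℝ) (hEpos : ∀ x y, 0 ≤ E x y) (hEsum : ∀ x, ∑ y, E x y = 1)
    (p : A → ℝ) (hp0 : ∀ x, 0 ≤ p x) (hp1 : ∑ x, p x = 1)
    (q : B → ℝ) (hq : ∀ y, q y = ∑ x, E x y * p x) :
    Real.logb 2 (1 / ⨆ y : B, ∑ x, (if 0 < E x y then p x else 0))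
      ≤ ∑ x, ∑ y, p x * E x y * Real.logb 2 (E x y / q y) := by
  show logb 2 (1 / ⨆ y, supportMass E p y) ≤ _
  have hlog2 : 0 < log 2 := log_pos one_lt_two
  calc logb 2 (1 / ⨆ y, supportMass E p y) = -log (⨆ y, supportMass E p y) / log 2 := by
        rw [logb, one_div, log_inv]
    _ ≤ (∑ x, ∑ y, p x * E x y * log (E x y / q y)) / log 2 := by
        gcongr
        exact neg_log_iSup_supportMass_le hEpos hEsum hp0 hp1 hq
    _ = ∑ x, ∑ y, p x * E x y * logb 2 (E x y / q y) := by
        simp only [logb, sum_div, mul_div_assoc]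

/-- Mutual information upper-bounds the log fractional packing
value at a fixed input distribution:
`I(E,p) ≥ log α*(E,p)` where `α*(E,p) = 1 / max_y ∑_{x : E(y|x)>0} p(x)`. -/
theorem stmt17 {A B : Type*} [Fintype A] [Fintype B] [Nonempty A] [Nonempty B]
    (E : A → B → ℝ) (hEpos : ∀ x y, 0 ≤ E x y) (hEsum : ∀ x, ∑ y, E x y = 1)
    (p : A → ℝ) (hp0 : ∀ x, 0 ≤ p x) (hp1 : ∑ x, p x = 1)
    (q : B → ℝ) (hq : ∀ y, q y = ∑ x, E x y * p x) :
    Real.logb 2 (1 / ⨆ y : B, ∑ x, (if 0 < E x y then p x else 0))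
      ≤ ∑ x, ∑ y, p x * E x y * Real.logb 2 (E x y / q y) :=
  stmt17_general E hEpos hEsum p hp0 hp1 q hq
end
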